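/- arXiv:1008.5332 — 7 statements merged into one kernel-verified Lean document; each statement's English description precedes it below -/
import Mathlib

section
/- Let V be a finite set of nodes, c : V × V → ℝ a capacity assignment with c(u,v) ≥ 0 for all u,v, and t, v ∈ V. Let f : V × V → ℝ be antisymmetric (f(u,v) = −f(v,u)) with f(u,v) ≤ c(u,v) for all u,v, and let c_f(u,v) = c(u,v) − f(u,v). Let g : V × V → ℝ be antisymmetric with g(u,v) ≤ c_f(u,v) for all u,v, with Σ_{w∈V} g(w,x) = 0 for every node x ∉ {v,t} (conservation away from v and t), and with Σ_{w∈V} g(v,w) ≥ 0 (nonnegative outflow at v). Then for every node u: if there is no directed path from u to t all of whose darts (x,y) satisfy c(x,y) − f(x,y) > 0, then there is also no directed path from u to t all of whose darts (x,y) satisfy c(x,y) − (f+g)(x,y) > 0. (Pushing a feasible v-to-t flow in the residual graph creates no new residual paths to t.) -/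
open Relation

/-- A dart `(x, y)` is residual with respect to flow `f` and capacities `c`
if `c x y - f x y > 0`. There is a residual path from `u` to `t` iff
`Relation.ReflTransGen` of the residual-dart relation holds. -/
theorem no_new_residual_paths_to_sink
    {V : Type*} [Fintype V]
    (c f g : V → V → ℝ) (t v : V)
    (hc : ∀ u w, 0 ≤ c u w)
    (hf_anti : ∀ u w, f u w = - f w u)
    (hf_cap : ∀ u w, f u w ≤ c u w)
    (hg_anti : ∀ u w, g u w = - g w u)
    (hg_cap : ∀ u w, g u w ≤ c u w - f u w)
    (hg_cons : ∀ x, x ≠ v → x ≠ t → ∑ w, g w x = 0)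
    (hg_out : 0 ≤ ∑ w, g v w) :
    ∀ u : V,
      ¬ Relation.ReflTransGen (fun x y => 0 < c x y - f x y) u t →
      ¬ Relation.ReflTransGen (fun x y => 0 < c x y - (f x y + g x y)) u t := by
  classical
  intro u hu hnew
  set Rf : V → V → Prop := fun x y => 0 < c x y - f x y with hRf
  set S : Finset V := Finset.univ.filter (fun x => ¬ Relation.ReflTransGen Rf x t) with hS
  have hmemS : ∀ x, x ∈ S ↔ ¬ Relation.ReflTransGen Rf x t := by
    intro x; simp [hS]
  have htS : t ∉ S := fun h => (hmemS t).1 h Relation.ReflTransGen.refl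
  have huS : u ∈ S := (hmemS u).2 hu
  -- saturated cut
  have hcut : ∀ x ∈ S, ∀ y, y ∉ S → c x y - f x y ≤ 0 := by
    intro x hx y hy
    by_contra h
    push_neg at h
    have hyt : Relation.ReflTransGen Rf y t := not_not.mp ((hmemS y).not.mp hy)
    exact (hmemS x).1 hx (Relation.ReflTransGen.head h hyt)
  have hgcut : ∀ x ∈ S, ∀ y, y ∉ S → 0 ≤ g y x := by
    intro x hx y hy
    have h1 : g x y ≤ 0 := le_trans (hg_cap x y) (hcut x hx y hy)
    rw [hg_anti] at h1; linarith
  -- find the first dart of the new path leaving S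
  have hexists : ∀ a, Relation.ReflTransGen (fun x y => 0 < c x y - (f x y + g x y)) a t →
      a ∈ S → ∃ x ∈ S, ∃ y, y ∉ S ∧ 0 < c x y - (f x y + g x y) := by
    intro a hpath
    induction hpath using Relation.ReflTransGen.head_induction_on with
    | refl => exact fun h => absurd h htS
    | head hab _ ih =>
      intro ha
      rename_i a' b' _
      by_cases hb : b' ∈ S
      · exact ih hb
      · exact ⟨a', ha, b', hb, hab⟩
  obtain ⟨x₀, hx₀, y₀, hy₀, hdart⟩ := hexists u hnew huS
  have hg0 : 0 < g y₀ x₀ := by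
    have h1 : c x₀ y₀ - f x₀ y₀ ≤ 0 := hcut x₀ hx₀ y₀ hy₀
    have h2 : g x₀ y₀ < 0 := by linarith
    rw [hg_anti] at h2; linarith
  -- total inflow into S is nonpositive
  have hsum_le : ∑ x ∈ S, ∑ w, g w x ≤ 0 := by
    apply Finset.sum_nonpos
    intro x hx
    by_cases hxv : x = v
    · have : ∑ w, g w x = - ∑ w, g v w := by
        rw [hxv, ← Finset.sum_neg_distrib]
        exact Finset.sum_congr rfl fun w _ => hg_anti w v
      linarith
    · have hxt : x ≠ t := by rintro rfl; exact htS hx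
      rw [hg_cons x hxv hxt]
  -- internal terms cancel
  have hinternal : ∑ x ∈ S, ∑ w ∈ S, g w x = 0 := by
    have h1 : ∑ x ∈ S, ∑ w ∈ S, g w x = ∑ w ∈ S, ∑ x ∈ S, g w x := Finset.sum_comm
    have h2 : ∑ w ∈ S, ∑ x ∈ S, g w x = - ∑ w ∈ S, ∑ x ∈ S, g x w := by
      rw [← Finset.sum_neg_distrib]
      refine Finset.sum_congr rfl fun w _ => ?_
      rw [← Finset.sum_neg_distrib]
      exact Finset.sum_congr rfl fun x _ => hg_anti w x
    linarith
  have hsplit : ∀ x, (∑ w ∈ S, g w x) + (∑ w ∈ Sᶜ, g w x) = ∑ w, g w x := by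
    intro x; exact Finset.sum_add_sum_compl S _
  have hcutsum_le : ∑ x ∈ S, ∑ w ∈ Sᶜ, g w x ≤ 0 := by
    have : ∑ x ∈ S, ((∑ w ∈ S, g w x) + (∑ w ∈ Sᶜ, g w x)) ≤ 0 := by
      simp_rw [hsplit]; exact hsum_le
    rw [Finset.sum_add_distrib, hinternal] at this
    linarith
  have hy₀c : y₀ ∈ Sᶜ := Finset.mem_compl.mpr hy₀
  have hinner : g y₀ x₀ ≤ ∑ w ∈ Sᶜ, g w x₀ :=
    Finset.single_le_sum (fun w hw => hgcut x₀ hx₀ w (Finset.mem_compl.mp hw)) hy₀c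
  have houter : ∑ w ∈ Sᶜ, g w x₀ ≤ ∑ x ∈ S, ∑ w ∈ Sᶜ, g w x :=
    Finset.single_le_sum (fun x hx => Finset.sum_nonneg (fun w hw => hgcut x hx w (Finset.mem_compl.mp hw))) hx₀
  linarith
end

section
/- Let V be a finite set of nodes, c a nonnegative capacity assignment, σ : V → ℝ a nonnegative supply assignment, t ∈ V the sink, and let f be a feasible preflow. Let X ⊆ V be a set of nodes and t′ ∈ V. Let g be antisymmetric with g(u,w) ≤ c_f(u,w) for all u,w, with outflow_g(w) ≥ 0 and outflow_g(w) ≤ σ_f(w) for every w ≠ t′, and whose support {(u,w) : g(u,w) > 0} contains no directed cycle. If there is no node u with σ_f(u) > 0 having an f-residual path from u to some node of X, then there is no node u with σ_{f+g}(u) > 0 having an (f+g)-residual path from u to some node of X. (Pushing a feasible acyclic preflow with sink t′ in the residual graph creates no admissible paths to X.) -/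
/-- inflow of a flow assignment at a node -/
def inflow {V : Type*} [Fintype V] (f : V → V → ℝ) (v : V) : ℝ := ∑ u, f u v

/-- outflow of a flow assignment at a node -/
def outflow {V : Type*} [Fintype V] (f : V → V → ℝ) (v : V) : ℝ := - inflow f v

/-- Pushing a feasible acyclic preflow with sink `t'` in the residual graph
creates no admissible paths to the set `X`. -/
theorem no_new_admissible_paths_to_set
    {V : Type*} [Fintype V]
    (c f g : V → V → ℝ) (σ : V → ℝ) (t t' : V) (X : Set V)
    (hc : ∀ u w, 0 ≤ c u w)
    (hσ : ∀ w, 0 ≤ σ w)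
    -- f is a feasible preflow:
    (hf_anti : ∀ u w, f u w = - f w u)
    (hf_cap : ∀ u w, f u w ≤ c u w)
    (hf_sup : ∀ w, w ≠ t → outflow f w ≤ σ w)
    -- g is a feasible preflow with sink t' in the residual graph:
    (hg_anti : ∀ u w, g u w = - g w u)
    (hg_cap : ∀ u w, g u w ≤ c u w - f u w)
    (hg_out_nonneg : ∀ w, w ≠ t' → 0 ≤ outflow g w)
    (hg_out_lim : ∀ w, w ≠ t' → outflow g w ≤ (σ w - outflow f w))
    -- the support of g contains no directed cycle:
    (hg_acyclic : ¬ ∃ x : V, Relation.TransGen (fun u w => 0 < g u w) x x)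
    -- no admissible path to X with respect to f:
    (h_no_adm : ¬ ∃ u : V, 0 < σ u - outflow f u ∧
        ∃ x ∈ X, Relation.ReflTransGen (fun a b => 0 < c a b - f a b) u x) :
    -- then no admissible path to X with respect to f + g:
    ¬ ∃ u : V, 0 < σ u - outflow (fun a b => f a b + g a b) u ∧
        ∃ x ∈ X, Relation.ReflTransGen
          (fun a b => 0 < c a b - (f a b + g a b)) u x := by
  classical
  rintro ⟨u, hu, x, hxX, hpath⟩
  set S : Set V := {v | ∃ y ∈ X, Relation.ReflTransGen (fun a b => 0 < c a b - f a b) v y}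
    with hSdef
  have hxS : x ∈ S := ⟨x, hxX, Relation.ReflTransGen.refl⟩
  have hS_back : ∀ a b, b ∈ S → 0 < c a b - f a b → a ∈ S := by
    rintro a b ⟨y, hy, hp⟩ hab
    exact ⟨y, hy, Relation.ReflTransGen.head hab hp⟩
  have hS_sup : ∀ v ∈ S, σ v - outflow f v ≤ 0 := by
    intro v hv
    by_contra h
    exact h_no_adm ⟨v, lt_of_not_ge h, hv⟩
  -- outflow of g is zero on S \ {t'}
  have hg_out_zero : ∀ v ∈ S, v ≠ t' → outflow g v = 0 := by
    intro v hv hne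
    have h1 := hg_out_nonneg v hne
    have h2 := hg_out_lim v hne
    have h3 := hS_sup v hv
    linarith
  -- g on darts leaving S across the boundary is nonnegative
  have hcross_nonneg : ∀ a b, a ∉ S → b ∈ S → 0 ≤ g b a := by
    intro a b ha hb
    have hcf : ¬ (0 < c a b - f a b) := fun h => ha (hS_back a b hb h)
    have h1 : g a b ≤ 0 := le_trans (hg_cap a b) (not_lt.mp hcf)
    have h2 := hg_anti b a
    linarith
  -- outflow of g as a sum of outgoing values
  have hout_eq : ∀ (h : V → V → ℝ), (∀ a b, h a b = - h b a) →
      ∀ v, outflow h v = ∑ a, h v a := by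
    intro h hanti v
    simp only [outflow, inflow, ← Finset.sum_neg_distrib]
    exact Finset.sum_congr rfl fun a _ => by rw [hanti v a]
  -- the double sum of g over any square vanishes
  have hzero : ∀ s : Finset V, ∑ b ∈ s, ∑ a ∈ s, g b a = 0 := by
    intro s
    have h1 : ∑ b ∈ s, ∑ a ∈ s, g b a = ∑ a ∈ s, ∑ b ∈ s, g b a := Finset.sum_comm
    have h2 : ∑ a ∈ s, ∑ b ∈ s, g b a = - ∑ a ∈ s, ∑ b ∈ s, g a b := by
      rw [← Finset.sum_neg_distrib]
      refine Finset.sum_congr rfl fun a _ => ?_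
      rw [← Finset.sum_neg_distrib]
      exact Finset.sum_congr rfl fun b _ => hg_anti b a
    linarith [h1.trans h2]
  -- total outflow of g over all nodes is zero
  have htotal : ∑ v, outflow g v = 0 := by
    calc ∑ v, outflow g v = ∑ v, ∑ a, g v a :=
          Finset.sum_congr rfl fun v _ => hout_eq g hg_anti v
      _ = 0 := hzero Finset.univ
  have ht'le : outflow g t' ≤ 0 := by
    have hsplit : outflow g t' + ∑ v ∈ Finset.univ.erase t', outflow g v
        = ∑ v, outflow g v := Finset.add_sum_erase _ _ (Finset.mem_univ t')
    have hrest : 0 ≤ ∑ v ∈ Finset.univ.erase t', outflow g v :=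
      Finset.sum_nonneg fun v hv => hg_out_nonneg v (Finset.ne_of_mem_erase hv)
    rw [htotal] at hsplit
    linarith
  -- the finite version of S
  set Sf : Finset V := Finset.univ.filter (fun v => v ∈ S) with hSf
  have hmemSf : ∀ v, v ∈ Sf ↔ v ∈ S := by
    intro v; simp [hSf]
  have hmemSfc : ∀ v, v ∈ Sfᶜ ↔ v ∉ S := by
    intro v; simp [hSf]
  -- the key boundary identity
  have hkey : ∑ v ∈ Sf, outflow g v = ∑ b ∈ Sf, ∑ a ∈ Sfᶜ, g b a := by
    have hinner : ∑ b ∈ Sf, ∑ a ∈ Sf, g b a = 0 := hzero Sf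
    calc ∑ v ∈ Sf, outflow g v
        = ∑ b ∈ Sf, ∑ a, g b a :=
          Finset.sum_congr rfl fun v _ => hout_eq g hg_anti v
      _ = ∑ b ∈ Sf, (∑ a ∈ Sf, g b a + ∑ a ∈ Sfᶜ, g b a) :=
          Finset.sum_congr rfl fun b _ => (Finset.sum_add_sum_compl Sf _).symm
      _ = ∑ b ∈ Sf, ∑ a ∈ Sf, g b a + ∑ b ∈ Sf, ∑ a ∈ Sfᶜ, g b a :=
          Finset.sum_add_distrib
      _ = ∑ b ∈ Sf, ∑ a ∈ Sfᶜ, g b a := by rw [hinner]; ring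
  -- the left side is at most 0
  have hLHS : ∑ v ∈ Sf, outflow g v ≤ 0 := by
    by_cases ht' : t' ∈ S
    · have ht'Sf : t' ∈ Sf := (hmemSf t').mpr ht'
      have hsplit : outflow g t' + ∑ v ∈ Sf.erase t', outflow g v
          = ∑ v ∈ Sf, outflow g v := Finset.add_sum_erase _ _ ht'Sf
      have hrest : ∑ v ∈ Sf.erase t', outflow g v = 0 :=
        Finset.sum_eq_zero fun v hv =>
          hg_out_zero v ((hmemSf v).mp (Finset.mem_of_mem_erase hv))
            (Finset.ne_of_mem_erase hv)
      linarith
    · refine le_of_eq (Finset.sum_eq_zero fun v hv => ?_)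
      have hvS := (hmemSf v).mp hv
      exact hg_out_zero v hvS (fun h => ht' (h ▸ hvS))
  -- hence all boundary darts carry zero g-flow
  have hcross0 : ∀ b ∈ S, ∀ a, a ∉ S → g b a = 0 := by
    have hterm : ∀ b ∈ Sf, 0 ≤ ∑ a ∈ Sfᶜ, g b a := fun b hb =>
      Finset.sum_nonneg fun a ha =>
        hcross_nonneg a b ((hmemSfc a).mp ha) ((hmemSf b).mp hb)
    have hsum0 : ∑ b ∈ Sf, ∑ a ∈ Sfᶜ, g b a = 0 :=
      le_antisymm (hkey ▸ hLHS) (Finset.sum_nonneg hterm)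
    have hall := (Finset.sum_eq_zero_iff_of_nonneg hterm).mp hsum0
    intro b hb a ha
    have hb' : b ∈ Sf := (hmemSf b).mpr hb
    have ha' : a ∈ Sfᶜ := (hmemSfc a).mpr ha
    have hinner0 := hall b hb'
    have hinner_nonneg : ∀ a' ∈ Sfᶜ, 0 ≤ g b a' := fun a' ha'' =>
      hcross_nonneg a' b ((hmemSfc a').mp ha'') hb
    exact (Finset.sum_eq_zero_iff_of_nonneg hinner_nonneg).mp hinner0 a ha'
  -- hence outflow of g is zero everywhere on S
  have houtS : ∀ v ∈ S, outflow g v = 0 := by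
    intro v hv
    by_cases hne : v = t'
    · subst hne
      have ht'Sf : v ∈ Sf := (hmemSf v).mpr hv
      have hsplit : outflow g v + ∑ w ∈ Sf.erase v, outflow g w
          = ∑ w ∈ Sf, outflow g w := Finset.add_sum_erase _ _ ht'Sf
      have hrest : ∑ w ∈ Sf.erase v, outflow g w = 0 :=
        Finset.sum_eq_zero fun w hw =>
          hg_out_zero w ((hmemSf w).mp (Finset.mem_of_mem_erase hw))
            (Finset.ne_of_mem_erase hw)
      have hSsum : ∑ w ∈ Sf, outflow g w = 0 := by
        rw [hkey]
        exact Finset.sum_eq_zero fun b hb =>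
          Finset.sum_eq_zero fun a ha =>
            hcross0 b ((hmemSf b).mp hb) a ((hmemSfc a).mp ha)
      linarith
    · exact hg_out_zero v hv hne
  -- every node with an (f+g)-residual path to X lies in S
  have hreach : ∀ v, Relation.ReflTransGen
      (fun a b => 0 < c a b - (f a b + g a b)) v x → v ∈ S := by
    intro v hp
    induction hp using Relation.ReflTransGen.head_induction_on with
    | refl => exact hxS
    | head hab _ ih =>
      rename_i a b _
      by_cases hr : 0 < c a b - f a b
      · exact hS_back a b ih hr
      · by_contra haS
        have h1 : g a b ≤ 0 := le_trans (hg_cap a b) (not_lt.mp hr)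
        have h2 : 0 < g b a := by have := hg_anti b a; nlinarith [hab]
        have h3 := hcross0 b ih a haS
        linarith
  have huS : u ∈ S := hreach u hpath
  -- conclude
  have hsplit : outflow (fun a b => f a b + g a b) u = outflow f u + outflow g u := by
    simp only [outflow, inflow, Finset.sum_add_distrib]
    ring
  have := hS_sup u huS
  rw [hsplit, houtS u huS] at hu
  linarith
end

section
/- Let V be a finite set of nodes, c a nonnegative capacity assignment, σ : V → ℝ a nonnegative supply assignment, and t ∈ V the sink. Let f be a feasible preflow such that for every node u ≠ t with σ_f(u) > 0 there is no f-residual path from u to t. Then f is a maximum feasible preflow: for every feasible preflow f′, inflow_{f′}(t) ≤ inflow_f(t). -/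
/-- a feasible preflow: antisymmetric, respects capacities and supplies -/
def IsFeasiblePreflow {V : Type*} [Fintype V]
    (c : V → V → ℝ) (σ : V → ℝ) (t : V) (f : V → V → ℝ) : Prop :=
  (∀ u w, f u w = - f w u) ∧ (∀ u w, f u w ≤ c u w) ∧
    (∀ w, w ≠ t → outflow f w ≤ σ w)

lemma cut_decomp {V : Type*} [Fintype V] [DecidableEq V] (S : Finset V) (t : V) (ht : t ∈ S)
    (g : V → V → ℝ) (hg : ∀ u w, g u w = - g w u) :
    inflow g t = (∑ v ∈ S, ∑ u ∈ Sᶜ, g u v) + ∑ v ∈ S.erase t, outflow g v := by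
  have h0 : (∑ v ∈ S, ∑ u ∈ S, g u v) = 0 := by
    have e1 : (∑ v ∈ S, ∑ u ∈ S, g u v) = ∑ v ∈ S, ∑ u ∈ S, -(g v u) :=
      Finset.sum_congr rfl (fun v _ => Finset.sum_congr rfl (fun u _ => hg u v))
    have e2 : (∑ v ∈ S, ∑ u ∈ S, -(g v u)) = - ∑ v ∈ S, ∑ u ∈ S, g v u := by
      simp
    have e3 : (∑ v ∈ S, ∑ u ∈ S, g v u) = ∑ v ∈ S, ∑ u ∈ S, g u v :=
      Finset.sum_comm
    linarith
  have h1 : ∑ v ∈ S, inflow g v = ∑ v ∈ S, ∑ u ∈ Sᶜ, g u v := by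
    unfold inflow
    have e : ∀ v, (∑ u, g u v) = (∑ u ∈ S, g u v) + ∑ u ∈ Sᶜ, g u v := by
      intro v; rw [Finset.sum_add_sum_compl]
    simp_rw [e, Finset.sum_add_distrib, h0, zero_add]
  have h2 : ∑ v ∈ S, inflow g v = inflow g t + ∑ v ∈ S.erase t, inflow g v :=
    (Finset.add_sum_erase S _ ht).symm
  have h3 : ∑ v ∈ S.erase t, outflow g v = - ∑ v ∈ S.erase t, inflow g v := by
    unfold outflow; simp
  linarith

/-- If no node with positive residual supply has a residual path to the sink,
then the preflow is maximum. -/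
theorem maximum_preflow_of_no_admissible_paths
    {V : Type*} [Fintype V]
    (c f : V → V → ℝ) (σ : V → ℝ) (t : V)
    (hc : ∀ u w, 0 ≤ c u w)
    (hσ : ∀ w, 0 ≤ σ w)
    (hf : IsFeasiblePreflow c σ t f)
    (h_no_adm : ∀ u : V, u ≠ t → 0 < σ u - outflow f u →
        ¬ Relation.ReflTransGen (fun a b => 0 < c a b - f a b) u t) :
    ∀ f' : V → V → ℝ, IsFeasiblePreflow c σ t f' →
      inflow f' t ≤ inflow f t := by
  classical
  intro f' hf'
  obtain ⟨hanti, hcap, hsup⟩ := hf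
  obtain ⟨hanti', hcap', hsup'⟩ := hf'
  set R : V → V → Prop := fun a b => 0 < c a b - f a b with hR
  set S : Finset V := Finset.univ.filter (fun v => Relation.ReflTransGen R v t) with hS
  have ht : t ∈ S := by
    simp only [hS, Finset.mem_filter, Finset.mem_univ, true_and]
    exact Relation.ReflTransGen.refl
  have hmemS : ∀ v, v ∈ S ↔ Relation.ReflTransGen R v t := by
    intro v; simp [hS]
  -- cross edges into S are saturated by f
  have hcross : ∀ v ∈ S, ∀ u ∈ Sᶜ, f u v = c u v := by
    intro v hv u hu
    rw [Finset.mem_compl, hmemS] at hu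
    rw [hmemS] at hv
    by_contra hne
    have hlt : f u v < c u v := lt_of_le_of_ne (hcap u v) hne
    exact hu (Relation.ReflTransGen.head (by simpa [hR] using sub_pos.mpr hlt) hv)
  -- supplies on S \ {t} are exhausted by f
  have hsat : ∀ v ∈ S.erase t, outflow f v = σ v := by
    intro v hv
    obtain ⟨hvt, hvS⟩ := Finset.mem_erase.mp hv
    refine le_antisymm (hsup v hvt) ?_
    by_contra hlt
    push_neg at hlt
    exact h_no_adm v hvt (by linarith) ((hmemS v).mp hvS)
  rw [cut_decomp S t ht f hanti, cut_decomp S t ht f' hanti']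
  gcongr with v hv u hu v hv
  · rw [hcross v hv u hu]; exact hcap' u v
  · rw [hsat v hv]
    exact hsup' v (Finset.mem_erase.mp hv).1
end

section
/- Let V be a finite set of nodes, c a nonnegative capacity assignment, σ : V → ℝ a nonnegative supply assignment, and t ∈ V the sink. Let f be a feasible preflow whose support {(u,v) : f(u,v) > 0} contains no directed cycle. Then there exists a feasible flow f′ (obeying conservation at all nodes other than t) such that 0 ≤ f′(u,v) ≤ f(u,v) for every dart (u,v) with f(u,v) > 0, and inflow_{f′}(t) ≥ inflow_f(t). -/
/-- a feasible flow: a feasible preflow that also obeys conservation -/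
def IsFeasibleFlow {V : Type*} [Fintype V]
    (c : V → V → ℝ) (σ : V → ℝ) (t : V) (f : V → V → ℝ) : Prop :=
  IsFeasiblePreflow c σ t f ∧ (∀ w, w ≠ t → 0 ≤ outflow f w)

open Finset

open scoped Classical in
/-- the set of nodes (other than the sink) with negative outflow -/
noncomputable def badSet {V : Type*} [Fintype V] (t : V) (f : V → V → ℝ) : Finset V :=
  Finset.univ.filter (fun v => v ≠ t ∧ outflow f v < 0)

lemma mem_badSet {V : Type*} [Fintype V] {t : V} {f : V → V → ℝ} {v : V} :
    v ∈ badSet t f ↔ v ≠ t ∧ outflow f v < 0 := by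
  classical simp [badSet]

/-- measure used for the induction -/
noncomputable def badMeasure {V : Type*} [Fintype V] (t : V) (rank : V → ℕ)
    (f : V → V → ℝ) : ℕ :=
  ∑ v ∈ badSet t f, (Fintype.card V + 1) ^ rank v

theorem acyclic_preflow_to_flow_aux {V : Type*} [Fintype V]
    (c : V → V → ℝ) (σ : V → ℝ) (t : V)
    (hc : ∀ u w, 0 ≤ c u w) (hσ : ∀ w, 0 ≤ σ w) (rank : V → ℕ) :
    ∀ (N : ℕ) (f : V → V → ℝ), badMeasure t rank f ≤ N →
      (∀ u w, 0 < f u w → rank u < rank w) →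
      IsFeasiblePreflow c σ t f →
      ∃ f', IsFeasibleFlow c σ t f' ∧
        (∀ u w, 0 < f u w → 0 ≤ f' u w ∧ f' u w ≤ f u w) ∧
        (∀ u w, f u w = 0 → f' u w = 0) ∧
        inflow f t ≤ inflow f' t := by
  intro N
  induction N with
  | zero =>
    intro f hμ hrank hf
    have hempty : badSet t f = ∅ := by
      by_contra h
      obtain ⟨v, hv⟩ := Finset.nonempty_iff_ne_empty.mpr h
      have h1 : (1 : ℕ) ≤ (Fintype.card V + 1) ^ rank v :=
        Nat.one_le_pow _ _ (Nat.succ_pos _)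
      have := Finset.single_le_sum (f := fun v => (Fintype.card V + 1) ^ rank v)
        (fun i _ => Nat.zero_le _) hv
      have : (1 : ℕ) ≤ badMeasure t rank f := le_trans h1 this
      omega
    refine ⟨f, ⟨hf, ?_⟩, fun u w hpos => ⟨hpos.le, le_rfl⟩, fun u w h0 => h0, le_rfl⟩
    intro w hw
    by_contra hlt
    push_neg at hlt
    have : w ∈ badSet t f := mem_badSet.mpr ⟨hw, hlt⟩
    simp [hempty] at this
  | succ N ih =>
    intro f hμ hrank hf
    by_cases hB : badSet t f = ∅
    · refine ⟨f, ⟨hf, ?_⟩, fun u w hpos => ⟨hpos.le, le_rfl⟩, fun u w h0 => h0, le_rfl⟩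
      intro w hw
      by_contra hlt
      push_neg at hlt
      have : w ∈ badSet t f := mem_badSet.mpr ⟨hw, hlt⟩
      simp [hB] at this
    · classical
      obtain ⟨w, hw⟩ := Finset.nonempty_iff_ne_empty.mpr hB
      obtain ⟨hwt, hwneg⟩ := mem_badSet.mp hw
      obtain ⟨hanti, hcap, hsup⟩ := hf
      set n := Fintype.card V with hn
      set A : Finset V := Finset.univ.filter (fun u => 0 < f u w) with hA
      set S : ℝ := ∑ u ∈ A, f u w with hS
      have hfww : f w w = 0 := by have := hanti w w; linarith
      have hsplit : S + ∑ u ∈ Finset.univ.filter (fun u => ¬ 0 < f u w), f u w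
          = inflow f w := by
        rw [hS, hA]
        rw [Finset.sum_filter_add_sum_filter_not Finset.univ (fun u => 0 < f u w)
          (fun u => f u w)]
        rfl
      have hnegpart : ∑ u ∈ Finset.univ.filter (fun u => ¬ 0 < f u w), f u w ≤ 0 :=
        Finset.sum_nonpos (fun u hu => le_of_not_gt (Finset.mem_filter.mp hu).2)
      have houtw : outflow f w = - inflow f w := rfl
      have hinpos : 0 < inflow f w := by
        rw [houtw] at hwneg; linarith
      have hSin : inflow f w ≤ S := by linarith
      have hSpos : 0 < S := lt_of_lt_of_le hinpos hSin
      set lam : ℝ := 1 + outflow f w / S with hlam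
      have hlam_lt : lam < 1 := by
        have : outflow f w / S < 0 := div_neg_of_neg_of_pos hwneg hSpos
        rw [hlam]; linarith
      have hlam_nonneg : 0 ≤ lam := by
        have h1 : -1 ≤ outflow f w / S := by
          rw [le_div_iff₀ hSpos, houtw]; linarith
        rw [hlam]; linarith
      have hlamS : lam * S = S + outflow f w := by
        rw [hlam]; field_simp
      set g : V → V → ℝ := fun u v =>
        if v = w ∧ 0 < f u v then lam * f u v
        else if u = w ∧ 0 < f v u then -(lam * f v u) else f u v with hg
      -- pointwise descriptions of g
      have hg_into : ∀ u, 0 < f u w → g u w = lam * f u w := by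
        intro u hu
        simp only [hg]
        split_ifs with h1 h2
        · rfl
        · simp [hu] at h1
        · simp [hu] at h1
      have hg_into' : ∀ u, ¬ 0 < f u w → g u w = f u w := by
        intro u hu
        simp only [hg]
        split_ifs with h1 h2
        · exact absurd h1.2 hu
        · obtain ⟨rfl, hpos⟩ := h2
          rw [hfww] at hpos
          exact absurd hpos (lt_irrefl 0)
        · rfl
      have hg_src : ∀ v, v ≠ w → 0 < f v w → g w v = -(lam * f v w) := by
        intro v hv hpos
        simp only [hg]
        split_ifs with h1 h2
        · exact absurd h1.1 hv
        · rfl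
        · simp [hpos] at h2
      have hg_src' : ∀ v, v ≠ w → ¬ 0 < f v w → g w v = f w v := by
        intro v hv hpos
        simp only [hg]
        split_ifs with h1 h2
        · exact absurd h1.1 hv
        · exact absurd h2.2 hpos
        · rfl
      have hg_other : ∀ u v, u ≠ w → v ≠ w → g u v = f u v := by
        intro u v hu hv
        simp only [hg]
        split_ifs with h1 h2
        · exact absurd h1.1 hv
        · exact absurd h2.1 hu
        · rfl
      have hg_ww : g w w = 0 := by
        simp only [hg]
        split_ifs with h1
        · exact absurd h1.2 (by simp [hfww])
        · exact hfww
      -- antisymmetry of g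
      have ganti : ∀ u v, g u v = - g v u := by
        intro u v
        by_cases hu : u = w
        · by_cases hv : v = w
          · rw [hu, hv, hg_ww]; ring
          · rw [hu]
            by_cases hp : 0 < f v w
            · rw [hg_src v hv hp, hg_into v hp]
            · rw [hg_src' v hv hp, hg_into' v hp]; exact hanti w v
        · by_cases hv : v = w
          · rw [hv]
            by_cases hp : 0 < f u w
            · rw [hg_into u hp, hg_src u hu hp]; ring
            · rw [hg_into' u hp, hg_src' u hu hp]; exact hanti u w
          · rw [hg_other u v hu hv, hg_other v u hv hu]; exact hanti u v
      -- capacities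
      have gcap : ∀ u v, g u v ≤ c u v := by
        intro u v
        simp only [hg]
        split_ifs with h1 h2
        · have : lam * f u v ≤ 1 * f u v :=
            mul_le_mul_of_nonneg_right hlam_lt.le h1.2.le
          rw [one_mul] at this
          exact this.trans (hcap u v)
        · have : 0 ≤ lam * f v u := mul_nonneg hlam_nonneg h2.2.le
          linarith [hc u v]
        · exact hcap u v
      -- relation between f and g
      have hPle : ∀ u v, 0 < f u v → 0 ≤ g u v ∧ g u v ≤ f u v := by
        intro u v hpos
        simp only [hg]
        split_ifs with h1 h2
        · constructor
          · exact mul_nonneg hlam_nonneg hpos.le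
          · have : lam * f u v ≤ 1 * f u v :=
              mul_le_mul_of_nonneg_right hlam_lt.le hpos.le
            linarith
        · exfalso
          have := hanti v u
          linarith [h2.2]
        · exact ⟨hpos.le, le_rfl⟩
      have hPzero : ∀ u v, f u v = 0 → g u v = 0 := by
        intro u v h0
        simp only [hg]
        split_ifs with h1 h2
        · exact absurd h0 (ne_of_gt h1.2)
        · exfalso
          have := hanti v u
          rw [h0] at this
          simp at this
          linarith [h2.2]
        · exact h0
      -- inflow of g at w is zero
      have hinflow_g_w : inflow g w = 0 := by
        have e1 : ∑ u ∈ A, g u w = lam * S := by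
          rw [hS, Finset.mul_sum]
          exact Finset.sum_congr rfl
            (fun u hu => hg_into u (by rw [hA] at hu; exact (Finset.mem_filter.mp hu).2))
        have e2 : ∑ u ∈ Finset.univ.filter (fun u => ¬ 0 < f u w), g u w
            = ∑ u ∈ Finset.univ.filter (fun u => ¬ 0 < f u w), f u w :=
          Finset.sum_congr rfl
            (fun u hu => hg_into' u (Finset.mem_filter.mp hu).2)
        have e3 : inflow g w = ∑ u ∈ A, g u w
            + ∑ u ∈ Finset.univ.filter (fun u => ¬ 0 < f u w), g u w := by
          rw [hA]
          rw [Finset.sum_filter_add_sum_filter_not Finset.univ (fun u => 0 < f u w)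
            (fun u => g u w)]
          rfl
        rw [e3, e1, e2, hlamS, houtw] at *
        linarith
      -- pointwise comparison into nodes other than w
      have hpt : ∀ u v, v ≠ w → f u v ≤ g u v := by
        intro u v hv
        by_cases hu : u = w
        · rw [hu]
          by_cases hp : 0 < f v w
          · rw [hg_src v hv hp]
            have h1 : lam * f v w ≤ 1 * f v w :=
              mul_le_mul_of_nonneg_right hlam_lt.le hp.le
            have := hanti w v
            linarith
          · rw [hg_src' v hv hp]
        · rw [hg_other u v hu hv]
      have hin_ge : ∀ v, v ≠ w → inflow f v ≤ inflow g v := by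
        intro v hv
        exact Finset.sum_le_sum (fun u _ => hpt u v hv)
      -- g is a feasible preflow
      have gsup : ∀ x, x ≠ t → outflow g x ≤ σ x := by
        intro x hx
        by_cases hxw : x = w
        · rw [hxw]
          show - inflow g w ≤ σ w
          rw [hinflow_g_w]
          simpa using hσ w
        · have := hin_ge x hxw
          have h2 := hsup x hx
          show - inflow g x ≤ σ x
          have : - inflow g x ≤ - inflow f x := by linarith
          exact this.trans h2
      have gpre : IsFeasiblePreflow c σ t g := ⟨ganti, gcap, gsup⟩
      -- rank property for g
      have grank : ∀ u v, 0 < g u v → rank u < rank v := by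
        intro u v h
        apply hrank
        by_contra hnp
        push_neg at hnp
        rcases lt_or_eq_of_le hnp with hneg | h0
        · have h1 := (hPle v u (by linarith [hanti u v])).1
          have h2 := ganti u v
          linarith
        · rw [hPzero u v h0] at h
          exact lt_irrefl 0 h
      -- the bad set of g
      have hout_g_w : outflow g w = 0 := by
        show - inflow g w = 0
        rw [hinflow_g_w]; ring
      have hsubset : badSet t g ⊆ (badSet t f ∪ A).erase w := by
        intro v hv
        obtain ⟨hvt, hvneg⟩ := mem_badSet.mp hv
        have hvw : v ≠ w := by
          rintro rfl
          rw [hout_g_w] at hvneg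
          exact lt_irrefl 0 hvneg
        rw [Finset.mem_erase]
        refine ⟨hvw, ?_⟩
        by_cases hvA : v ∈ A
        · exact Finset.mem_union_right _ hvA
        · apply Finset.mem_union_left
          apply mem_badSet.mpr
          refine ⟨hvt, ?_⟩
          have hnA : ¬ 0 < f v w := by
            intro hp
            exact hvA (by rw [hA]; exact Finset.mem_filter.mpr ⟨Finset.mem_univ _, hp⟩)
          have heq : inflow g v = inflow f v := by
            unfold inflow
            apply Finset.sum_congr rfl
            intro u _
            by_cases hu : u = w
            · subst hu; exact hg_src' v hvw hnA
            · exact hg_other u v hu hvw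
          show - inflow f v < 0
          rw [← heq]
          exact hvneg
      -- rank w is at least 1
      have hAne : A.Nonempty := by
        rw [Finset.nonempty_iff_ne_empty]
        intro h
        rw [hS, h] at hSpos
        simp at hSpos
      have hwrank : 1 ≤ rank w := by
        obtain ⟨u, hu⟩ := hAne
        have := hrank u w (by rw [hA] at hu; exact (Finset.mem_filter.mp hu).2)
        omega
      -- measure decreases
      have hAsum : ∑ u ∈ A, (n + 1) ^ rank u ≤ n * (n + 1) ^ (rank w - 1) := by
        calc ∑ u ∈ A, (n + 1) ^ rank u
            ≤ ∑ _u ∈ A, (n + 1) ^ (rank w - 1) := by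
              apply Finset.sum_le_sum
              intro u hu
              apply Nat.pow_le_pow_right (Nat.succ_pos n)
              have := hrank u w (by rw [hA] at hu; exact (Finset.mem_filter.mp hu).2)
              omega
          _ = A.card * (n + 1) ^ (rank w - 1) := by
              rw [Finset.sum_const, smul_eq_mul]
          _ ≤ n * (n + 1) ^ (rank w - 1) := by
              apply Nat.mul_le_mul_right
              rw [hn]
              exact (Finset.card_filter_le _ _).trans (le_of_eq Finset.card_univ)
      have hwlt : n * (n + 1) ^ (rank w - 1) < (n + 1) ^ rank w := by
        have : rank w = (rank w - 1) + 1 := by omega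
        rw [this, pow_succ]
        have hp : 0 < (n + 1) ^ (rank w - 1) := Nat.pow_pos (Nat.succ_pos n)
        calc n * (n + 1) ^ (rank w - 1) < (n + 1) * (n + 1) ^ (rank w - 1) := by
              exact (Nat.mul_lt_mul_right hp).mpr (Nat.lt_succ_self n)
          _ = (n + 1) ^ (rank w - 1) * (n + 1) := by ring
      have hμg : badMeasure t rank g ≤ N := by
        have h1 : badMeasure t rank g
            ≤ ∑ v ∈ (badSet t f ∪ A).erase w, (n + 1) ^ rank v :=
          Finset.sum_le_sum_of_subset hsubset
        have h2 : (badSet t f ∪ A).erase w ⊆ (badSet t f).erase w ∪ A := by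
          intro x hx
          obtain ⟨hxw, hxu⟩ := Finset.mem_erase.mp hx
          rcases Finset.mem_union.mp hxu with h | h
          · exact Finset.mem_union_left _ (Finset.mem_erase.mpr ⟨hxw, h⟩)
          · exact Finset.mem_union_right _ h
        have h3 : ∑ v ∈ (badSet t f ∪ A).erase w, (n + 1) ^ rank v
            ≤ ∑ v ∈ (badSet t f).erase w ∪ A, (n + 1) ^ rank v :=
          Finset.sum_le_sum_of_subset h2
        have h4 : ∑ v ∈ (badSet t f).erase w ∪ A, (n + 1) ^ rank v
            ≤ ∑ v ∈ (badSet t f).erase w, (n + 1) ^ rank v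
              + ∑ v ∈ A, (n + 1) ^ rank v := by
          have := Finset.sum_union_inter (s₁ := (badSet t f).erase w) (s₂ := A)
            (f := fun v => (n + 1) ^ rank v)
          omega
        have h5 : ∑ v ∈ (badSet t f).erase w, (n + 1) ^ rank v + (n + 1) ^ rank w
            = badMeasure t rank f :=
          Finset.sum_erase_add _ _ hw
        have h6 : badMeasure t rank f ≤ N + 1 := hμ
        omega
      -- apply the induction hypothesis to g
      obtain ⟨f', hflow, hle, hzero, hint⟩ := ih g hμg grank gpre
      refine ⟨f', hflow, ?_, ?_, ?_⟩
      · intro u v hpos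
        obtain ⟨h0g, hgle⟩ := hPle u v hpos
        rcases eq_or_lt_of_le h0g with he | hlt
        · rw [hzero u v he.symm]
          exact ⟨le_rfl, hpos.le⟩
        · obtain ⟨a, b⟩ := hle u v hlt
          exact ⟨a, b.trans hgle⟩
      · intro u v h0
        exact hzero u v (hPzero u v h0)
      · have h1 : inflow f t ≤ inflow g t := hin_ge t (Ne.symm hwt)
        exact h1.trans hint

/-- A feasible preflow with acyclic support can be converted into a feasible
flow, of at least the same value, which on every flow-carrying dart pushes
between `0` and the original amount. -/
theorem acyclic_preflow_to_flow
    {V : Type*} [Fintype V]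
    (c f : V → V → ℝ) (σ : V → ℝ) (t : V)
    (hc : ∀ u w, 0 ≤ c u w)
    (hσ : ∀ w, 0 ≤ σ w)
    (hf : IsFeasiblePreflow c σ t f)
    (hf_acyclic : ¬ ∃ x : V, Relation.TransGen (fun u w => 0 < f u w) x x) :
    ∃ f' : V → V → ℝ, IsFeasibleFlow c σ t f' ∧
      (∀ u w, 0 < f u w → 0 ≤ f' u w ∧ f' u w ≤ f u w) ∧
      inflow f t ≤ inflow f' t := by
  classical
  set r : V → V → Prop := fun u w => 0 < f u w with hr
  set rank : V → ℕ :=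
    fun v => (Finset.univ.filter (fun u => Relation.TransGen r u v)).card with hrankdef
  have hrank : ∀ u w, 0 < f u w → rank u < rank w := by
    intro u w hpos
    apply Finset.card_lt_card
    rw [Finset.ssubset_iff_of_subset]
    · refine ⟨u, ?_, ?_⟩
      · exact Finset.mem_filter.mpr ⟨Finset.mem_univ _, Relation.TransGen.single hpos⟩
      · intro hmem
        exact hf_acyclic ⟨u, (Finset.mem_filter.mp hmem).2⟩
    · intro x hx
      obtain ⟨_, hx2⟩ := Finset.mem_filter.mp hx
      exact Finset.mem_filter.mpr ⟨Finset.mem_univ _, hx2.tail hpos⟩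
  obtain ⟨f', h1, h2, _, h4⟩ :=
    acyclic_preflow_to_flow_aux c σ t hc hσ rank (badMeasure t rank f) f le_rfl hrank hf
  exact ⟨f', h1, h2, h4⟩
end

section
/- Let k ≥ 1 be an integer and let G₀, G₁, …, G_k and H₁, …, H_k be real numbers with H_j ≥ 0 for all j and G_j ≥ 10^5 for 0 ≤ j ≤ k−1. Suppose that for each j with 1 ≤ j ≤ k there exists θ_j ∈ [1/3, 2/3] such that H_j ≤ θ_j·G_{j−1} + 2·√(2·G_{j−1}) and G_j ≤ (1−θ_j)·G_{j−1} + 2·√(2·G_{j−1}). Then Σ_{j=1}^{k} H_j^{3/2} ≤ 0.7·G₀^{3/2}. -/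
open Real

private lemma rpow32_eq {x : ℝ} (hx : 0 ≤ x) : x ^ ((3:ℝ)/2) = Real.sqrt x ^ 3 := by
  rw [Real.sqrt_eq_rpow, ← Real.rpow_natCast (x ^ ((1:ℝ)/2)) 3, ← Real.rpow_mul hx]
  norm_num

private lemma rpow32_neg {x : ℝ} (hx : x < 0) : x ^ ((3:ℝ)/2) = 0 := by
  rw [Real.rpow_def_of_neg hx]
  have h : ((3:ℝ)/2) * π = π/2 + π := by ring
  rw [h]
  simp [Real.cos_add]

private lemma rpow32_nonneg (x : ℝ) : 0 ≤ x ^ ((3:ℝ)/2) := by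
  rcases le_or_gt 0 x with h | h
  · exact Real.rpow_nonneg h _
  · rw [rpow32_neg h]

private lemma rpow32_mono {x y : ℝ} (hxy : x ≤ y) (hy : 0 ≤ y) :
    x ^ ((3:ℝ)/2) ≤ y ^ ((3:ℝ)/2) := by
  rcases le_or_gt 0 x with h | h
  · exact Real.rpow_le_rpow h hxy (by norm_num)
  · rw [rpow32_neg h]; exact rpow32_nonneg y

private lemma core2 (a e : ℝ) (ha1 : 1/3 ≤ a) (ha2 : a ≤ 2/3) (he0 : 0 ≤ e) (he : e ≤ 9/1000) :
    (a + e) ^ ((3:ℝ)/2) + 0.7 * (1 - a + e) ^ ((3:ℝ)/2) ≤ 0.7 := by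
  have hu : (0:ℝ) ≤ a + e := by linarith
  have hv : (0:ℝ) ≤ 1 - a + e := by linarith
  rw [rpow32_eq hu, rpow32_eq hv]
  set s := Real.sqrt (a + e) with hs
  set t := Real.sqrt (1 - a + e) with ht
  have hs0 : 0 ≤ s := Real.sqrt_nonneg _
  have ht0 : 0 ≤ t := Real.sqrt_nonneg _
  have hs2 : s ^ 2 = a + e := Real.sq_sqrt hu
  have ht2 : t ^ 2 = 1 - a + e := Real.sq_sqrt hv
  have hsl : (577:ℝ)/1000 ≤ s := by nlinarith
  have hsu : s ≤ (822:ℝ)/1000 := by nlinarith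
  have htl : (577:ℝ)/1000 ≤ t := by nlinarith
  have htu : t ≤ (822:ℝ)/1000 := by nlinarith
  have h1 : 0 ≤ (s - 577/1000) * (822/1000 - s) *
      ((577/1000 + 822/1000) * s + (577/1000) * (822/1000)) := by
    apply mul_nonneg (mul_nonneg (by linarith) (by linarith))
    nlinarith
  have h2 : 0 ≤ (t - 577/1000) * (822/1000 - t) *
      ((577/1000 + 822/1000) * t + (577/1000) * (822/1000)) := by
    apply mul_nonneg (mul_nonneg (by linarith) (by linarith))
    nlinarith
  nlinarith [h1, h2, hs2, ht2]

private lemma step_lemma (g θ h g' : ℝ) (hg : (10:ℝ)^5 ≤ g) (hθ1 : 1/3 ≤ θ) (hθ2 : θ ≤ 2/3)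
    (hh0 : 0 ≤ h) (hh : h ≤ θ * g + 2 * Real.sqrt (2 * g))
    (hg' : g' ≤ (1 - θ) * g + 2 * Real.sqrt (2 * g)) :
    h ^ ((3:ℝ)/2) + 0.7 * g' ^ ((3:ℝ)/2) ≤ 0.7 * g ^ ((3:ℝ)/2) := by
  have hgpos : (0:ℝ) < g := by norm_num at hg ⊢; linarith
  set r := Real.sqrt (2 * g) with hrdef
  have hr0 : 0 ≤ r := Real.sqrt_nonneg _
  have hr2 : r ^ 2 = 2 * g := Real.sq_sqrt (by linarith)
  set e := 2 * r / g with hedef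
  have he0 : 0 ≤ e := by positivity
  have he : e ≤ 9/1000 := by
    rw [hedef, div_le_iff₀ hgpos]
    nlinarith [hr2, hr0, hg]
  have key1 : θ * g + 2 * r = (θ + e) * g := by
    field_simp [hedef]
    rw [hedef]; field_simp
  have key2 : (1 - θ) * g + 2 * r = (1 - θ + e) * g := by
    field_simp [hedef]
    rw [hedef]; field_simp
  have hue : (0:ℝ) ≤ θ + e := by linarith
  have hve : (0:ℝ) ≤ 1 - θ + e := by linarith
  have e1 : (θ * g + 2 * r) ^ ((3:ℝ)/2) = (θ + e) ^ ((3:ℝ)/2) * g ^ ((3:ℝ)/2) := by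
    rw [key1, Real.mul_rpow hue hgpos.le]
  have e2 : ((1 - θ) * g + 2 * r) ^ ((3:ℝ)/2) = (1 - θ + e) ^ ((3:ℝ)/2) * g ^ ((3:ℝ)/2) := by
    rw [key2, Real.mul_rpow hve hgpos.le]
  have m1 : h ^ ((3:ℝ)/2) ≤ (θ + e) ^ ((3:ℝ)/2) * g ^ ((3:ℝ)/2) := by
    rw [← e1]; exact rpow32_mono hh (by nlinarith)
  have m2 : g' ^ ((3:ℝ)/2) ≤ (1 - θ + e) ^ ((3:ℝ)/2) * g ^ ((3:ℝ)/2) := by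
    rw [← e2]; exact rpow32_mono hg' (by nlinarith)
  have hc := core2 θ e hθ1 hθ2 he0 he
  have hgr : 0 ≤ g ^ ((3:ℝ)/2) := rpow32_nonneg g
  nlinarith [mul_le_mul_of_nonneg_right hc hgr]

private lemma aux_sum (G H : ℕ → ℝ) (hH : ∀ j, 0 ≤ H j) :
    ∀ k : ℕ, (∀ j, j ≤ k - 1 → (10:ℝ)^5 ≤ G j) →
    (∀ j, 1 ≤ j → j ≤ k →
      ∃ θ : ℝ, 1/3 ≤ θ ∧ θ ≤ 2/3 ∧
        H j ≤ θ * G (j-1) + 2 * Real.sqrt (2 * G (j-1)) ∧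
        G j ≤ (1 - θ) * G (j-1) + 2 * Real.sqrt (2 * G (j-1))) →
    ∑ j ∈ Finset.Icc 1 k, (H j) ^ ((3:ℝ)/2) ≤
      0.7 * (G 0) ^ ((3:ℝ)/2) - 0.7 * (G k) ^ ((3:ℝ)/2) := by
  intro k
  induction k with
  | zero => intro _ _; simp
  | succ k ih =>
    intro hG hstep
    have hG' : ∀ j, j ≤ k - 1 → (10:ℝ)^5 ≤ G j := by
      intro j hj
      exact hG j (le_trans hj (by omega))
    have hstep' : ∀ j, 1 ≤ j → j ≤ k →
        ∃ θ : ℝ, 1/3 ≤ θ ∧ θ ≤ 2/3 ∧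
          H j ≤ θ * G (j-1) + 2 * Real.sqrt (2 * G (j-1)) ∧
          G j ≤ (1 - θ) * G (j-1) + 2 * Real.sqrt (2 * G (j-1)) := by
      intro j h1 h2
      exact hstep j h1 (le_trans h2 (Nat.le_succ k))
    have hIH := ih hG' hstep'
    obtain ⟨θ, hθ1, hθ2, hh, hg⟩ := hstep (k+1) (Nat.succ_le_succ (Nat.zero_le k)) le_rfl
    simp only [Nat.add_sub_cancel] at hh hg
    have hgk : (10:ℝ)^5 ≤ G k := hG k (by omega)
    have hstepk := step_lemma (G k) θ (H (k+1)) (G (k+1)) hgk hθ1 hθ2 (hH (k+1)) hh hg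
    rw [Finset.sum_Icc_succ_top (Nat.succ_le_succ (Nat.zero_le k))]
    linarith

/-- Lemma 6 of the paper: bound on `∑ H_j ^ (3/2)` for sizes produced by
repeatedly removing the inside of a balanced Jordan separator. -/
theorem sum_enclosed_sizes_bound
    (k : ℕ) (hk : 1 ≤ k) (G H : ℕ → ℝ)
    (hH : ∀ j, 0 ≤ H j)
    (hG : ∀ j, j ≤ k - 1 → (10:ℝ)^5 ≤ G j)
    (hstep : ∀ j, 1 ≤ j → j ≤ k →
      ∃ θ : ℝ, 1/3 ≤ θ ∧ θ ≤ 2/3 ∧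
        H j ≤ θ * G (j-1) + 2 * Real.sqrt (2 * G (j-1)) ∧
        G j ≤ (1 - θ) * G (j-1) + 2 * Real.sqrt (2 * G (j-1))) :
    ∑ j ∈ Finset.Icc 1 k, (H j) ^ ((3:ℝ)/2) ≤ 0.7 * (G 0) ^ ((3:ℝ)/2) := by
  have h := aux_sum G H hH k hG hstep
  have h2 := rpow32_nonneg (G k)
  linarith
end

section
/- For every real number n with n ≥ 10^5 and every real θ with 1/3 ≤ θ ≤ 2/3, one has (θ·n + 2·√(2n))^{3/2} + 1.4·((1−θ)·n + 2·√(2n))^{3/2} ≤ 0.98·n^{3/2}. -/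
private lemma rpow_three_halves (x : ℝ) (hx : 0 ≤ x) :
    x ^ ((3:ℝ)/2) = x * Real.sqrt x := by
  rw [show (3:ℝ)/2 = 1 + 1/2 by norm_num, Real.rpow_add' hx (by norm_num),
    Real.rpow_one, Real.sqrt_eq_rpow]

private lemma key_ineq (θ p q : ℝ) (hθ1 : 1/3 ≤ θ) (hθ2 : θ ≤ 2/3)
    (hp0 : 0 ≤ p) (hq0 : 0 ≤ q) (hp : p^2 = θ + 0.009) (hq : q^2 = 1.009 - θ) :
    (θ + 0.009) * p + 1.4 * ((1.009 - θ) * q) ≤ 0.98 := by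
  have h1 : (θ + 0.009) * p = p^3 := by rw [← hp]; ring
  have h2 : (1.009 - θ) * q = q^3 := by rw [← hq]; ring
  rw [h1, h2]
  nlinarith [sq_nonneg (p-q), sq_nonneg (p+q), sq_nonneg (p - 0.585),
    sq_nonneg (q - 0.822), mul_nonneg hp0 hq0, sq_nonneg (p*q),
    sq_nonneg (p - 0.822), sq_nonneg (q - 0.585)]

theorem separator_bound_theta'
    (n θ : ℝ) (hn : (10:ℝ)^5 ≤ n) (hθ1 : 1/3 ≤ θ) (hθ2 : θ ≤ 2/3) :
    (θ * n + 2 * Real.sqrt (2*n)) ^ ((3:ℝ)/2)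
      + 1.4 * ((1 - θ) * n + 2 * Real.sqrt (2*n)) ^ ((3:ℝ)/2) ≤
      0.98 * n ^ ((3:ℝ)/2) := by
  have hn0 : (0:ℝ) < n := by nlinarith
  have hsq : Real.sqrt (2*n) ≤ 0.0045 * n := by
    have h1 : Real.sqrt (2*n) ≤ Real.sqrt ((0.0045*n)^2) := by
      apply Real.sqrt_le_sqrt; nlinarith
    rwa [Real.sqrt_sq (by positivity)] at h1
  have hs : 2 * Real.sqrt (2*n) ≤ 0.009 * n := by linarith
  have hs0 : 0 ≤ Real.sqrt (2*n) := Real.sqrt_nonneg _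
  -- bounds on the two arguments
  have ha0 : 0 ≤ θ * n + 2 * Real.sqrt (2*n) := by nlinarith
  have hb0 : 0 ≤ (1 - θ) * n + 2 * Real.sqrt (2*n) := by nlinarith
  have ha : θ * n + 2 * Real.sqrt (2*n) ≤ (θ + 0.009) * n := by nlinarith
  have hb : (1 - θ) * n + 2 * Real.sqrt (2*n) ≤ (1.009 - θ) * n := by nlinarith
  have hA : (θ * n + 2 * Real.sqrt (2*n)) ^ ((3:ℝ)/2) ≤ ((θ + 0.009) * n) ^ ((3:ℝ)/2) :=
    Real.rpow_le_rpow ha0 ha (by norm_num)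
  have hB : ((1 - θ) * n + 2 * Real.sqrt (2*n)) ^ ((3:ℝ)/2) ≤ ((1.009 - θ) * n) ^ ((3:ℝ)/2) :=
    Real.rpow_le_rpow hb0 hb (by norm_num)
  have hc0 : (0:ℝ) ≤ θ + 0.009 := by linarith
  have hd0 : (0:ℝ) ≤ 1.009 - θ := by linarith
  have hA' : ((θ + 0.009) * n) ^ ((3:ℝ)/2)
      = (θ + 0.009) ^ ((3:ℝ)/2) * n ^ ((3:ℝ)/2) :=
    Real.mul_rpow hc0 hn0.le
  have hB' : ((1.009 - θ) * n) ^ ((3:ℝ)/2)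
      = (1.009 - θ) ^ ((3:ℝ)/2) * n ^ ((3:ℝ)/2) :=
    Real.mul_rpow hd0 hn0.le
  have hkey : (θ + 0.009) ^ ((3:ℝ)/2) + 1.4 * (1.009 - θ) ^ ((3:ℝ)/2) ≤ 0.98 := by
    rw [rpow_three_halves _ hc0, rpow_three_halves _ hd0]
    exact key_ineq θ (Real.sqrt (θ + 0.009)) (Real.sqrt (1.009 - θ)) hθ1 hθ2
      (Real.sqrt_nonneg _) (Real.sqrt_nonneg _)
      (Real.sq_sqrt hc0) (Real.sq_sqrt hd0)
  have hnpow : (0:ℝ) ≤ n ^ ((3:ℝ)/2) := Real.rpow_nonneg hn0.le _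
  calc (θ * n + 2 * Real.sqrt (2*n)) ^ ((3:ℝ)/2)
      + 1.4 * ((1 - θ) * n + 2 * Real.sqrt (2*n)) ^ ((3:ℝ)/2)
      ≤ (θ + 0.009) ^ ((3:ℝ)/2) * n ^ ((3:ℝ)/2)
        + 1.4 * ((1.009 - θ) ^ ((3:ℝ)/2) * n ^ ((3:ℝ)/2)) := by
        rw [← hA', ← hB']; nlinarith [hA, hB]
    _ = ((θ + 0.009) ^ ((3:ℝ)/2) + 1.4 * (1.009 - θ) ^ ((3:ℝ)/2)) * n ^ ((3:ℝ)/2) := by ring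
    _ ≤ 0.98 * n ^ ((3:ℝ)/2) := by nlinarith [hkey, hnpow]
end

section
/- Let k ≥ 1 be an integer and let G₀, G₁, …, G_k and H₁, …, H_k be real numbers with H_j ≥ 0 for all j and G_j ≥ 10^5 for 0 ≤ j ≤ k−1. Suppose that for each j with 1 ≤ j ≤ k there exists θ_j ∈ [1/3, 2/3] such that H_j ≤ θ_j·G_{j−1} + 2·√(2·G_{j−1}) and G_j ≤ (1−θ_j)·G_{j−1} + 2·√(2·G_{j−1}). Then H₁^{3/2} + 2·Σ_{j=2}^{k} H_j^{3/2} ≤ 0.98·G₀^{3/2}. -/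
private lemma num_rpow_le {a q : ℝ} (ha : 0 ≤ a) (hq : 0 ≤ q) (h : a ^ 3 ≤ q ^ 2) :
    a ^ ((3:ℝ)/2) ≤ q := by
  have h1 : a ^ ((3:ℝ)/2) = Real.sqrt (a ^ 3) := by
    rw [Real.sqrt_eq_rpow, ← Real.rpow_natCast a 3, ← Real.rpow_mul ha]
    norm_num
  rw [h1]
  calc Real.sqrt (a ^ 3) ≤ Real.sqrt (q ^ 2) := Real.sqrt_le_sqrt h
    _ = q := Real.sqrt_sq hq

private lemma secant {x : ℝ} (h1 : (1027:ℝ)/3000 ≤ x) (h2 : x ≤ 2027/3000) :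
    x ^ ((3:ℝ)/2) ≤ ((2027/3000 - x) * (200301/1000000 : ℝ)
      + (x - 1027/3000) * (555395/1000000 : ℝ)) * 3 := by
  have hconv := convexOn_rpow (p := (3:ℝ)/2) (by norm_num)
  have ha : ((1027:ℝ)/3000) ∈ Set.Ici (0:ℝ) := by norm_num
  have hb : ((2027:ℝ)/3000) ∈ Set.Ici (0:ℝ) := by norm_num
  have hkey := hconv.2 ha hb (by linarith : (0:ℝ) ≤ (2027/3000 - x) * 3)
    (by linarith : (0:ℝ) ≤ (x - 1027/3000) * 3) (by ring)
  simp only [smul_eq_mul] at hkey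
  rw [show ((2027/3000 - x) * 3) * ((1027:ℝ)/3000) + ((x - 1027/3000) * 3) * ((2027:ℝ)/3000) = x
    by ring] at hkey
  have hPa : ((1027:ℝ)/3000) ^ ((3:ℝ)/2) ≤ 200301/1000000 :=
    num_rpow_le (by norm_num) (by norm_num) (by norm_num)
  have hPb : ((2027:ℝ)/3000) ^ ((3:ℝ)/2) ≤ 555395/1000000 :=
    num_rpow_le (by norm_num) (by norm_num) (by norm_num)
  nlinarith [hkey, hPa, hPb, mul_le_mul_of_nonneg_left hPa (by linarith : (0:ℝ) ≤ (2027/3000 - x) * 3),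
    mul_le_mul_of_nonneg_left hPb (by linarith : (0:ℝ) ≤ (x - 1027/3000) * 3)]

private lemma L1 {θ : ℝ} (h1 : 1/3 ≤ θ) (h2 : θ ≤ 2/3) :
    2 * (θ + 9/1000) ^ ((3:ℝ)/2) + 1.4 * (1 - θ + 9/1000) ^ ((3:ℝ)/2) ≤ 1.4 := by
  have sx := secant (x := θ + 9/1000) (by linarith) (by linarith)
  have sy := secant (x := 1 - θ + 9/1000) (by linarith) (by linarith)
  norm_num at sx sy ⊢
  linarith

private lemma L2 {θ : ℝ} (h1 : 1/3 ≤ θ) (h2 : θ ≤ 2/3) :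
    (θ + 9/1000) ^ ((3:ℝ)/2) + 1.4 * (1 - θ + 9/1000) ^ ((3:ℝ)/2) ≤ 0.98 := by
  have sx := secant (x := θ + 9/1000) (by linarith) (by linarith)
  have sy := secant (x := 1 - θ + 9/1000) (by linarith) (by linarith)
  norm_num at sx sy ⊢
  linarith

private lemma sqrt_small {g : ℝ} (hg : (10:ℝ)^5 ≤ g) :
    2 * Real.sqrt (2 * g) ≤ 9/1000 * g := by
  have hg0 : (0:ℝ) ≤ g := by nlinarith
  have h1 : Real.sqrt (2 * g) ≤ 9/2000 * g := by
    rw [show (9:ℝ)/2000 * g = Real.sqrt ((9/2000 * g)^2) from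
      (Real.sqrt_sq (by nlinarith)).symm]
    apply Real.sqrt_le_sqrt
    nlinarith
  linarith

private lemma rpow32_le {x y : ℝ} (hx : 0 ≤ x) (hxy : x ≤ y) :
    x ^ ((3:ℝ)/2) ≤ y ^ ((3:ℝ)/2) :=
  Real.rpow_le_rpow hx hxy (by norm_num)

/-- Quantitative core of Lemma 7 of the paper: bound on the total cost of the
recursive calls of the multiple-source max-preflow algorithm. -/
theorem recursive_cost_bound
    (k : ℕ) (hk : 1 ≤ k) (G H : ℕ → ℝ)
    (hH : ∀ j, 0 ≤ H j)
    (hG : ∀ j, j ≤ k - 1 → (10:ℝ)^5 ≤ G j)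
    (hstep : ∀ j, 1 ≤ j → j ≤ k →
      ∃ θ : ℝ, 1/3 ≤ θ ∧ θ ≤ 2/3 ∧
        H j ≤ θ * G (j-1) + 2 * Real.sqrt (2 * G (j-1)) ∧
        G j ≤ (1 - θ) * G (j-1) + 2 * Real.sqrt (2 * G (j-1))) :
    (H 1) ^ ((3:ℝ)/2) + 2 * ∑ j ∈ Finset.Icc 2 k, (H j) ^ ((3:ℝ)/2) ≤
      0.98 * (G 0) ^ ((3:ℝ)/2) := by
  set T : ℕ → ℝ := fun i => (max (G i) 0) ^ ((3:ℝ)/2) with hT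
  have hTnn : ∀ i, 0 ≤ T i := fun i => Real.rpow_nonneg (le_max_right _ _) _
  -- key step bound: for 1 ≤ m ≤ k,
  -- H m ^ (3/2) + 1.4 * T m ≤ c * G (m-1) ^ (3/2) with factor from L1/L2
  have hstepb : ∀ m : ℕ, 1 ≤ m → m ≤ k →
      H m ^ ((3:ℝ)/2) + 1.4 * T m ≤ 0.98 * (G (m-1)) ^ ((3:ℝ)/2) ∧
      2 * H m ^ ((3:ℝ)/2) + 1.4 * T m ≤ 1.4 * (G (m-1)) ^ ((3:ℝ)/2) := by
    intro m hm1 hmk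
    obtain ⟨θ, hθ1, hθ2, hHm, hGm⟩ := hstep m hm1 hmk
    have hGprev : (10:ℝ)^5 ≤ G (m-1) := hG (m-1) (by omega)
    have hGp0 : (0:ℝ) ≤ G (m-1) := by nlinarith
    have hsq := sqrt_small hGprev
    have hH' : H m ≤ (θ + 9/1000) * G (m-1) := by nlinarith
    have hG' : max (G m) 0 ≤ (1 - θ + 9/1000) * G (m-1) := by
      apply max_le
      · nlinarith
      · nlinarith
    have hHb : H m ^ ((3:ℝ)/2) ≤ (θ + 9/1000) ^ ((3:ℝ)/2) * (G (m-1)) ^ ((3:ℝ)/2) := by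
      calc H m ^ ((3:ℝ)/2) ≤ ((θ + 9/1000) * G (m-1)) ^ ((3:ℝ)/2) :=
            rpow32_le (hH m) hH'
        _ = (θ + 9/1000) ^ ((3:ℝ)/2) * (G (m-1)) ^ ((3:ℝ)/2) :=
            Real.mul_rpow (by linarith) hGp0
    have hTb : T m ≤ (1 - θ + 9/1000) ^ ((3:ℝ)/2) * (G (m-1)) ^ ((3:ℝ)/2) := by
      calc T m ≤ ((1 - θ + 9/1000) * G (m-1)) ^ ((3:ℝ)/2) :=
            rpow32_le (le_max_right _ _) hG'
        _ = (1 - θ + 9/1000) ^ ((3:ℝ)/2) * (G (m-1)) ^ ((3:ℝ)/2) :=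
            Real.mul_rpow (by linarith) hGp0
    have hGr : 0 ≤ (G (m-1)) ^ ((3:ℝ)/2) := Real.rpow_nonneg hGp0 _
    have l1 := L1 hθ1 hθ2
    have l2 := L2 hθ1 hθ2
    constructor
    · nlinarith [mul_le_mul_of_nonneg_right l2 hGr]
    · nlinarith [mul_le_mul_of_nonneg_right l1 hGr]
  -- downward induction
  have key : ∀ d : ℕ, ∀ m : ℕ, m + d = k + 1 → 2 ≤ m →
      2 * ∑ j ∈ Finset.Icc m k, (H j) ^ ((3:ℝ)/2) ≤ 1.4 * T (m-1) := by
    intro d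
    induction d with
    | zero =>
      intro m hm _
      have : Finset.Icc m k = ∅ := by
        rw [Finset.Icc_eq_empty_iff]; omega
      rw [this]
      simp only [Finset.sum_empty, mul_zero]
      positivity
    | succ n ih =>
      intro m hm h2
      have hmk : m ≤ k := by omega
      have hsplit : Finset.Icc m k = insert m (Finset.Icc (m+1) k) := by
        ext x; simp [Finset.mem_Icc]; omega
      have hnotmem : m ∉ Finset.Icc (m+1) k := by simp
      rw [hsplit, Finset.sum_insert hnotmem]
      have ihm := ih (m+1) (by omega) (by omega)
      have hsb := (hstepb m (by omega) hmk).2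
      have hTm : T ((m+1)-1) = T m := by norm_num
      rw [hTm] at ihm
      have : 1.4 * (G (m-1)) ^ ((3:ℝ)/2) ≤ 1.4 * T (m-1) := by
        have : G (m-1) ≤ max (G (m-1)) 0 := le_max_left _ _
        have hGprev : (10:ℝ)^5 ≤ G (m-1) := hG (m-1) (by omega)
        have := rpow32_le (by nlinarith : (0:ℝ) ≤ G (m-1)) this
        linarith
      linarith
  have hkey2 := key (k - 1) 2 (by omega) le_rfl
  have hT1 : T (2-1) = T 1 := by norm_num
  rw [hT1] at hkey2
  have hsb := (hstepb 1 le_rfl hk).1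
  norm_num at hsb
  linarith
end
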